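/- Let G = (N, E) be a finite simple connected graph and let H be a 2-connected subgraph of G containing an edge ê = (w,z) and two distinct vertices n_e and n₁. Suppose t is a vertex of G not in H such that there exists a path in G from t to n_e whose only vertex in H is n_e. Then there exists a spanning forest of G consisting of exactly two vertex-disjoint trees such that one tree contains t together with one endpoint of ê and the other tree contains n₁ together with the other endpoint of ê; that is, T({t,w}, {n₁,z}) ∪ T({t,z}, {n₁,w}) ≠ ∅. -/

import Mathlib

open Finset

variable {V : Type*} [Fintype V] [DecidableEq V]

/-- `F` is the edge set of a spanning forest of `G` consisting of exactly two
vertex-disjoint trees that together cover all vertices of `G`, one tree containing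
every vertex of `N₁` and the other containing every vertex of `N₂`. -/
def IsTwoTreeForest (G : SimpleGraph V) (N₁ N₂ : Set V) (F : Finset (Sym2 V)) : Prop :=
  ↑F ⊆ G.edgeSet ∧
    (SimpleGraph.fromEdgeSet (↑F : Set (Sym2 V))).IsAcyclic ∧
    ∃ u v : V,
      ¬(SimpleGraph.fromEdgeSet (↑F : Set (Sym2 V))).Reachable u v ∧
      (∀ x : V, (SimpleGraph.fromEdgeSet (↑F : Set (Sym2 V))).Reachable x u ∨
        (SimpleGraph.fromEdgeSet (↑F : Set (Sym2 V))).Reachable x v) ∧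
      (∀ x ∈ N₁, (SimpleGraph.fromEdgeSet (↑F : Set (Sym2 V))).Reachable x u) ∧
      (∀ x ∈ N₂, (SimpleGraph.fromEdgeSet (↑F : Set (Sym2 V))).Reachable x v)

/-- The set `T(N₁, N₂)` of spanning forests of `G` consisting of exactly two trees,
one containing `N₁` and the other containing `N₂`, identified with their edge sets. -/
noncomputable def twoForests (G : SimpleGraph V) (N₁ N₂ : Set V) :
    Finset (Finset (Sym2 V)) :=
  letI := Classical.decPred (IsTwoTreeForest G N₁ N₂)
  Finset.univ.filter (IsTwoTreeForest G N₁ N₂)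

/-- `H` is a 2-connected subgraph of `G`: it is connected, has at least three vertices,
and remains connected after the deletion of any single vertex. -/
def SubgraphTwoConnected (G : SimpleGraph V) (H : G.Subgraph) : Prop :=
  H.Connected ∧ 3 ≤ Nat.card H.verts ∧
    ∀ u ∈ H.verts, (H.deleteVerts {u}).Connected


set_option linter.unusedSectionVars false

namespace TwoForestAux

open SimpleGraph

variable {V : Type*} [Fintype V] [DecidableEq V]

/-- First-hit lemma: if a walk meets `S`, some prefix of it ends at its first `S`-vertex. -/
lemma walk_firstHit {G : SimpleGraph V} {a b : V} (p : G.Walk a b) (S : Set V)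
    (h : ∃ v ∈ p.support, v ∈ S) :
    ∃ (c : V) (q : G.Walk a c), c ∈ S ∧ (∀ v ∈ q.support, v ∈ p.support) ∧
      (∀ e ∈ q.edges, e ∈ p.edges) ∧ (∀ v ∈ q.support, v ∈ S → v = c) ∧
      q.support.count c = 1 := by
  classical
  induction p with
  | nil =>
    obtain ⟨v, hv, hvS⟩ := h
    simp only [SimpleGraph.Walk.support_nil, List.mem_singleton] at hv
    subst hv
    exact ⟨v, .nil, hvS, by simp, by simp, by simp, by simp⟩
  | @cons u x w h' p' ih =>
    by_cases hu : u ∈ S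
    · refine ⟨u, .nil, hu, by simp, by simp, by simp, by simp⟩
    · have h2 : ∃ v ∈ p'.support, v ∈ S := by
        obtain ⟨v, hv, hvS⟩ := h
        rw [SimpleGraph.Walk.support_cons, List.mem_cons] at hv
        rcases hv with rfl | hv
        · exact absurd hvS hu
        · exact ⟨v, hv, hvS⟩
      obtain ⟨c, q, hcS, hsup, hedg, honly, hcount⟩ := ih h2
      refine ⟨c, .cons h' q, hcS, ?_, ?_, ?_, ?_⟩
      · intro v hv
        rw [SimpleGraph.Walk.support_cons, List.mem_cons] at hv ⊢
        exact hv.imp id (fun h => hsup _ h)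
      · intro e he
        rw [SimpleGraph.Walk.edges_cons, List.mem_cons] at he ⊢
        exact he.imp id (fun h => hedg _ h)
      · intro v hv hvS
        rw [SimpleGraph.Walk.support_cons, List.mem_cons] at hv
        rcases hv with rfl | hv
        · exact absurd hvS hu
        · exact honly _ hv hvS
      · have huc : u ≠ c := fun h => hu (h ▸ hcS)
        rw [SimpleGraph.Walk.support_cons, List.count_cons]
        simp [huc, hcount]

/-- A walk from inside `c` to outside `c` crosses an edge of the boundary. -/
lemma exists_crossing_edge {G : SimpleGraph V} {a b : V} (p : G.Walk a b) (c : Set V)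
    (ha : a ∈ c) (hb : b ∉ c) :
    ∃ u v, G.Adj u v ∧ u ∈ c ∧ v ∉ c ∧ v ∈ p.support := by
  induction p with
  | nil => exact absurd ha hb
  | @cons u x w h' p' ih =>
    by_cases hx : x ∈ c
    · obtain ⟨u', v', h1, h2, h3, h4⟩ := ih hx hb
      refine ⟨u', v', h1, h2, h3, ?_⟩
      rw [SimpleGraph.Walk.support_cons]
      exact List.mem_cons_of_mem _ h4
    · refine ⟨u, x, h', ha, hx, ?_⟩
      rw [SimpleGraph.Walk.support_cons]
      exact List.mem_cons_of_mem _ p'.start_mem_support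

lemma reachable_eq_of_isolated {K : SimpleGraph V} {y : V} (h : ∀ v, ¬K.Adj y v) {v : V}
    (hr : K.Reachable y v) : v = y := by
  obtain ⟨p⟩ := hr
  cases p with
  | nil => rfl
  | cons h' _ => exact absurd h' (h _)

/-- Removing a pendant edge at `y` (whose unique neighbour is `x`) preserves reachability
between vertices other than `y`. -/
lemma reachable_deleteEdge_of_pendant {K : SimpleGraph V} {x y : V}
    (hy : ∀ b, K.Adj y b → b = x) {u v : V} (hu : u ≠ y) (hv : v ≠ y)
    (h : K.Reachable u v) : (K.deleteEdges {s(x, y)}).Reachable u v := by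
  rw [reachable_iff_reflTransGen] at h
  have key : ∀ w, Relation.ReflTransGen K.Adj u w →
      (K.deleteEdges {s(x, y)}).Reachable u (if w = y then x else w) := by
    intro w hw
    induction hw with
    | refl => rw [if_neg hu]
    | @tail b c hub hbc ih =>
      by_cases hc : c = y
      · have hbx : b = x := hy b (hc ▸ hbc.symm)
        have haxy : K.Adj x y := by rw [← hbx, ← hc]; exact hbc
        rw [if_pos hc]
        rw [hbx, if_neg haxy.ne] at ih
        exact ih
      · by_cases hb : b = y
        · have hcx : c = x := hy c (hb ▸ hbc)
          rw [if_pos hb] at ih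
          rw [if_neg hc, hcx]
          exact ih
        · rw [if_neg hb] at ih
          rw [if_neg hc]
          refine ih.trans (SimpleGraph.Adj.reachable ?_)
          rw [SimpleGraph.deleteEdges_adj]
          refine ⟨hbc, ?_⟩
          simp only [Set.mem_singleton_iff, Sym2.eq_iff]
          rintro (⟨rfl, rfl⟩ | ⟨rfl, rfl⟩)
          · exact hc rfl
          · exact hb rfl
  have := key v h
  rwa [if_neg hv] at this

/-- Adding a pendant edge to an acyclic graph keeps it acyclic. -/
lemma isAcyclic_insert_pendant {s : Set (Sym2 V)} (hs : (fromEdgeSet s).IsAcyclic)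
    {x y : V} (hxy : x ≠ y) (hy : ∀ e ∈ s, y ∉ e) :
    (fromEdgeSet (insert s(x, y) s)).IsAcyclic := by
  rw [isAcyclic_iff_forall_adj_isBridge]
  intro u v huv
  rw [isBridge_iff]
  refine ?_
  rw [fromEdgeSet_adj] at huv
  obtain ⟨hmem, hne⟩ := huv
  rw [Set.mem_insert_iff] at hmem
  rcases hmem with heq | hmem
  · -- the new pendant edge is a bridge
    intro hreach
    have hiso : ∀ b, ¬(fromEdgeSet (insert s(x, y) s) \ fromEdgeSet {s(u, v)}).Adj y b := by
      intro b hadj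
      have h1 : (fromEdgeSet (insert s(x, y) s)).Adj y b := hadj.1
      have h2 : ¬(fromEdgeSet {s(u, v)}).Adj y b := hadj.2
      rw [fromEdgeSet_adj, Set.mem_insert_iff] at h1
      rcases h1.1 with h3 | h3
      · exact h2 (by rw [fromEdgeSet_adj]; exact ⟨by rw [heq]; exact h3, h1.2⟩)
      · exact (hy _ h3) (Sym2.mem_mk_left y b)
    rw [Sym2.eq_iff] at heq
    rcases heq with ⟨rfl, rfl⟩ | ⟨rfl, rfl⟩
    · exact hne (reachable_eq_of_isolated hiso hreach.symm)
    · exact hne (reachable_eq_of_isolated hiso hreach).symm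
  · -- an old edge remains a bridge
    intro hreach
    have huy : u ≠ y := fun h => hy _ hmem (h ▸ Sym2.mem_mk_left u v)
    have hvy : v ≠ y := fun h => hy _ hmem (h ▸ Sym2.mem_mk_right u v)
    have hKadj : ∀ b, (fromEdgeSet (insert s(x, y) s) \ fromEdgeSet {s(u, v)}).Adj y b → b = x := by
      intro b hadj
      have h1 : (fromEdgeSet (insert s(x, y) s)).Adj y b := hadj.1
      rw [fromEdgeSet_adj, Set.mem_insert_iff] at h1
      rcases h1.1 with h3 | h3
      · rw [Sym2.eq_iff] at h3
        rcases h3 with ⟨h4, h5⟩ | ⟨h4, h5⟩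
        · exact absurd h4 (Ne.symm hxy)
        · exact h5
      · exact absurd (Sym2.mem_mk_left y b) (hy _ h3)
    have hreach2 := reachable_deleteEdge_of_pendant hKadj huy hvy hreach
    have hle : ((fromEdgeSet (insert s(x, y) s) \ fromEdgeSet {s(u, v)}).deleteEdges {s(x, y)}) ≤
        fromEdgeSet (s \ {s(u, v)}) := by
      intro a b hab
      rw [SimpleGraph.deleteEdges_adj] at hab
      obtain ⟨⟨hab1, hab2⟩, hab3⟩ := hab
      rw [fromEdgeSet_adj] at hab1 ⊢
      rw [Set.mem_insert_iff] at hab1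
      rcases hab1.1 with h3 | h3
      · exact absurd h3 hab3
      · refine ⟨⟨h3, ?_⟩, hab1.2⟩
        intro hmem2
        exact hab2 (by rw [fromEdgeSet_adj]; exact ⟨hmem2, hab1.2⟩)
    have hreach3 : (fromEdgeSet (s \ {s(u, v)})).Reachable u v := hreach2.mono hle
    have hbridge := (isAcyclic_iff_forall_adj_isBridge.mp hs)
      (by rw [fromEdgeSet_adj]; exact ⟨hmem, hne⟩ : (fromEdgeSet s).Adj u v)
    rw [isBridge_iff] at hbridge
    refine hbridge (hreach3.mono ?_)
    intro a b hab
    rw [fromEdgeSet_adj] at hab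
    obtain ⟨⟨hab1, hab2⟩, hab3⟩ := hab
    constructor
    · rw [fromEdgeSet_adj]; exact ⟨hab1, hab3⟩
    · intro hcon
      rw [fromEdgeSet_adj] at hcon
      exact hab2 hcon.1

/-- Walks in a graph whose edges live inside two disjoint sets stay on one side. -/
lemma reachable_stay {s : Set (Sym2 V)} {c₁ c₂ : Set V}
    (hE : ∀ u v, s(u, v) ∈ s → (u ∈ c₁ ∧ v ∈ c₁) ∨ (u ∈ c₂ ∧ v ∈ c₂))
    (hdisj : ∀ v, v ∈ c₁ → v ∈ c₂ → False) {a b : V} (ha : a ∈ c₁)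
    (h : (fromEdgeSet s).Reachable a b) : b ∈ c₁ := by
  rw [reachable_iff_reflTransGen] at h
  induction h with
  | refl => exact ha
  | @tail b c hab hbc ih =>
    rw [fromEdgeSet_adj] at hbc
    rcases hE _ _ hbc.1 with ⟨h1, h2⟩ | ⟨h1, h2⟩
    · exact h2
    · exact absurd h1 (fun hh => hdisj _ ih hh)

/-- Invariant for growing a two-tree spanning forest. -/
structure Inv (G : SimpleGraph V) (F : Finset (Sym2 V)) (c₁ c₂ : Finset V) (r₁ r₂ : V) : Prop where
  subE : ∀ e ∈ F, e ∈ G.edgeSet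
  sides : ∀ u v, s(u, v) ∈ F → (u ∈ c₁ ∧ v ∈ c₁) ∨ (u ∈ c₂ ∧ v ∈ c₂)
  disj : ∀ v, v ∈ c₁ → v ∈ c₂ → False
  r1 : r₁ ∈ c₁
  r2 : r₂ ∈ c₂
  acyc : (SimpleGraph.fromEdgeSet (↑F : Set (Sym2 V))).IsAcyclic
  reach1 : ∀ x ∈ c₁, (SimpleGraph.fromEdgeSet (↑F : Set (Sym2 V))).Reachable x r₁
  reach2 : ∀ x ∈ c₂, (SimpleGraph.fromEdgeSet (↑F : Set (Sym2 V))).Reachable x r₂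

lemma Inv.swap {G : SimpleGraph V} {F c₁ c₂ r₁ r₂} (h : Inv G F c₁ c₂ r₁ r₂) :
    Inv G F c₂ c₁ r₂ r₁ :=
  ⟨h.subE, fun u v hm => (h.sides u v hm).symm, fun v h1 h2 => h.disj v h2 h1,
    h.r2, h.r1, h.acyc, h.reach2, h.reach1⟩

lemma Inv.step {G : SimpleGraph V} {F c₁ c₂ r₁ r₂} (hI : Inv G F c₁ c₂ r₁ r₂) {u w : V}
    (hadj : G.Adj u w) (hu : u ∈ c₁) (hw1 : w ∉ c₁) (hw2 : w ∉ c₂) :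
    Inv G (insert s(u, w) F) (insert w c₁) c₂ r₁ r₂ := by
  have huw : u ≠ w := fun h => hw1 (h ▸ hu)
  have hwe : ∀ e ∈ (↑F : Set (Sym2 V)), w ∉ e := by
    intro e he hwmem
    induction e with
    | h a b =>
      rcases Sym2.mem_iff.mp hwmem with rfl | rfl
      · rcases hI.sides _ _ he with ⟨h1, _⟩ | ⟨h1, _⟩
        · exact hw1 h1
        · exact hw2 h1
      · rcases hI.sides _ _ he with ⟨_, h1⟩ | ⟨_, h1⟩
        · exact hw1 h1
        · exact hw2 h1
  have hcoe : (↑(insert s(u, w) F) : Set (Sym2 V)) = insert s(u, w) (↑F : Set (Sym2 V)) :=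
    Finset.coe_insert _ _
  have hmono : SimpleGraph.fromEdgeSet (↑F : Set (Sym2 V)) ≤
      SimpleGraph.fromEdgeSet (↑(insert s(u, w) F) : Set (Sym2 V)) := by
    rw [hcoe]; exact SimpleGraph.fromEdgeSet_mono (Set.subset_insert _ _)
  refine ⟨?_, ?_, ?_, Finset.mem_insert_of_mem hI.r1, hI.r2, ?_, ?_, ?_⟩
  · intro e he
    rcases Finset.mem_insert.mp he with rfl | he
    · exact hadj
    · exact hI.subE e he
  · intro a b hm
    rcases Finset.mem_insert.mp hm with heq | hm
    · rw [Sym2.eq_iff] at heq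
      rcases heq with ⟨rfl, rfl⟩ | ⟨rfl, rfl⟩
      · exact Or.inl ⟨Finset.mem_insert_of_mem hu, Finset.mem_insert_self _ _⟩
      · exact Or.inl ⟨Finset.mem_insert_self _ _, Finset.mem_insert_of_mem hu⟩
    · rcases hI.sides a b hm with ⟨h1, h2⟩ | h12
      · exact Or.inl ⟨Finset.mem_insert_of_mem h1, Finset.mem_insert_of_mem h2⟩
      · exact Or.inr h12
  · intro v hv1 hv2
    rcases Finset.mem_insert.mp hv1 with rfl | hv1
    · exact hw2 hv2
    · exact hI.disj v hv1 hv2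
  · rw [hcoe]
    exact isAcyclic_insert_pendant hI.acyc huw hwe
  · intro a ha
    rcases Finset.mem_insert.mp ha with heq | ha
    · have hadj2 : (SimpleGraph.fromEdgeSet (↑(insert s(u, w) F) : Set (Sym2 V))).Adj a u := by
        rw [heq, SimpleGraph.fromEdgeSet_adj, hcoe]
        exact ⟨by rw [Sym2.eq_swap]; exact Set.mem_insert _ _, huw.symm⟩
      exact hadj2.reachable.trans ((hI.reach1 u hu).mono hmono)
    · exact (hI.reach1 a ha).mono hmono
  · intro a ha
    exact (hI.reach2 a ha).mono hmono

/-- Growing one side of the forest to fill a connected vertex set `S`. -/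
lemma grow_within (G : SimpleGraph V) {S c₂ : Finset V} {r₁ r₂ : V}
    (hS2 : ∀ x ∈ S, x ∉ c₂)
    (hwalks : ∀ v ∈ S, ∃ p : G.Walk r₁ v, ∀ u ∈ p.support, u ∈ S) :
    ∀ (n : ℕ) (c₁ : Finset V) (F : Finset (Sym2 V)), Inv G F c₁ c₂ r₁ r₂ → c₁ ⊆ S →
      (S \ c₁).card = n → ∃ F', Inv G F' S c₂ r₁ r₂ := by
  intro n
  induction n with
  | zero =>
    intro c₁ F hI hsub hcard
    have : S ⊆ c₁ := by
      intro a ha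
      by_contra hna
      have : a ∈ S \ c₁ := Finset.mem_sdiff.mpr ⟨ha, hna⟩
      rw [Finset.card_eq_zero] at hcard
      simp [hcard] at this
    have heq : c₁ = S := Finset.Subset.antisymm hsub this
    exact ⟨F, heq ▸ hI⟩
  | succ n ih =>
    intro c₁ F hI hsub hcard
    have hne : (S \ c₁).Nonempty := by
      rw [← Finset.card_pos, hcard]; omega
    obtain ⟨y, hy⟩ := hne
    rw [Finset.mem_sdiff] at hy
    obtain ⟨p, hp⟩ := hwalks y hy.1
    obtain ⟨a, b, hab, ha, hb, hbsup⟩ :=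
      exists_crossing_edge p (↑c₁ : Set V) (by exact_mod_cast hI.r1) (by exact_mod_cast hy.2)
    have hbS : b ∈ S := hp b hbsup
    have hb1 : b ∉ c₁ := by exact_mod_cast hb
    have ha1 : a ∈ c₁ := by exact_mod_cast ha
    have hI' := hI.step hab ha1 hb1 (hS2 b hbS)
    refine ih (insert b c₁) _ hI' (Finset.insert_subset hbS hsub) ?_
    have h1 : S \ insert b c₁ = (S \ c₁).erase b := by
      ext x
      simp only [Finset.mem_sdiff, Finset.mem_insert, Finset.mem_erase]
      tauto
    rw [h1, Finset.card_erase_of_mem (Finset.mem_sdiff.mpr ⟨hbS, hb1⟩), hcard]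
    omega

/-- Growing both sides of the forest to cover all vertices. -/
lemma grow_all (G : SimpleGraph V) (hG : G.Preconnected) {r₁ r₂ : V} :
    ∀ (n : ℕ) (c₁ c₂ : Finset V) (F : Finset (Sym2 V)), Inv G F c₁ c₂ r₁ r₂ →
      (Finset.univ \ (c₁ ∪ c₂)).card = n →
      ∃ F' c₁' c₂', Inv G F' c₁' c₂' r₁ r₂ ∧ c₁ ⊆ c₁' ∧ c₂ ⊆ c₂' ∧ c₁' ∪ c₂' = Finset.univ := by
  intro n
  induction n with
  | zero =>
    intro c₁ c₂ F hI hcard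
    refine ⟨F, c₁, c₂, hI, Finset.Subset.refl _, Finset.Subset.refl _, ?_⟩
    rw [Finset.card_eq_zero] at hcard
    apply Finset.eq_univ_of_forall
    intro x
    by_contra hx
    have : x ∈ Finset.univ \ (c₁ ∪ c₂) := Finset.mem_sdiff.mpr ⟨Finset.mem_univ _, hx⟩
    simp [hcard] at this
  | succ n ih =>
    intro c₁ c₂ F hI hcard
    have hne : (Finset.univ \ (c₁ ∪ c₂)).Nonempty := by
      rw [← Finset.card_pos, hcard]; omega
    obtain ⟨y, hy⟩ := hne
    rw [Finset.mem_sdiff] at hy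
    obtain ⟨p⟩ := hG r₁ y
    have hr1 : r₁ ∈ (↑(c₁ ∪ c₂) : Set V) := by
      exact_mod_cast Finset.mem_union_left _ hI.r1
    obtain ⟨a, b, hab, ha, hb, _⟩ :=
      exists_crossing_edge p (↑(c₁ ∪ c₂) : Set V) hr1 (by exact_mod_cast hy.2)
    have ha' : a ∈ c₁ ∪ c₂ := by exact_mod_cast ha
    have hb' : b ∉ c₁ ∪ c₂ := by exact_mod_cast hb
    have hb1 : b ∉ c₁ := fun h => hb' (Finset.mem_union_left _ h)
    have hb2 : b ∉ c₂ := fun h => hb' (Finset.mem_union_right _ h)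
    have hcard' : ∀ (d₁ d₂ : Finset V), d₁ ∪ d₂ = insert b (c₁ ∪ c₂) →
        (Finset.univ \ (d₁ ∪ d₂)).card = n := by
      intro d₁ d₂ hd
      rw [hd]
      have h1 : Finset.univ \ insert b (c₁ ∪ c₂) = (Finset.univ \ (c₁ ∪ c₂)).erase b := by
        ext x
        simp only [Finset.mem_sdiff, Finset.mem_insert, Finset.mem_erase, Finset.mem_univ,
          true_and]
        tauto
      rw [h1, Finset.card_erase_of_mem (Finset.mem_sdiff.mpr ⟨Finset.mem_univ _, hb'⟩), hcard]
      omega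
    rcases Finset.mem_union.mp ha' with ha1 | ha2
    · have hI' := hI.step hab ha1 hb1 hb2
      obtain ⟨F', c₁', c₂', h1, h2, h3, h4⟩ := ih (insert b c₁) c₂ _ hI'
        (hcard' _ _ (by rw [Finset.insert_union]))
      exact ⟨F', c₁', c₂', h1, (Finset.subset_insert _ _).trans h2, h3, h4⟩
    · have hI' := (hI.swap.step hab ha2 hb2 hb1).swap
      obtain ⟨F', c₁', c₂', h1, h2, h3, h4⟩ := ih c₁ (insert b c₂) _ hI'
        (hcard' _ _ (by rw [Finset.union_insert]))
      exact ⟨F', c₁', c₂', h1, h2, (Finset.subset_insert _ _).trans h3, h4⟩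

section Menger

variable {W : Type*} [Fintype W] [DecidableEq W]

/-- The merge map collapsing `y` onto `x`. -/
def mp (x y : W) (v : W) : W := if v = y then x else v

lemma mp_ne_y {x y v : W} (hxy : x ≠ y) : mp x y v ≠ y := by
  unfold mp; split
  · exact hxy
  · assumption

@[simp] lemma mp_x {x y : W} : mp x y x = x := by
  unfold mp; split <;> simp_all

@[simp] lemma mp_y {x y : W} : mp x y y = x := by simp [mp]

lemma mp_of_ne {x y v : W} (h : v ≠ y) : mp x y v = v := by simp [mp, h]

/-- Contraction of the edge `xy`, realised on the same vertex set with `y` isolated. -/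
def merge (K : SimpleGraph W) (x y : W) : SimpleGraph W :=
  SimpleGraph.fromEdgeSet (Sym2.map (mp x y) '' K.edgeSet)

lemma merge_adj {K : SimpleGraph W} {x y u v : W} :
    (merge K x y).Adj u v ↔ s(u, v) ∈ Sym2.map (mp x y) '' K.edgeSet ∧ u ≠ v := by
  rw [merge, SimpleGraph.fromEdgeSet_adj]

lemma merge_y_isolated {K : SimpleGraph W} {x y : W} (hxy : x ≠ y) (b : W) :
    ¬(merge K x y).Adj y b := by
  rw [merge_adj]
  rintro ⟨⟨e, he, hmap⟩, hne⟩
  induction e with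
  | h a c =>
    rw [Sym2.map_pair_eq, Sym2.eq_iff] at hmap
    rcases hmap with ⟨h1, _⟩ | ⟨_, h2⟩
    · exact mp_ne_y hxy h1
    · exact mp_ne_y hxy h2

lemma merge_y_support {K : SimpleGraph W} {x y : W} (hxy : x ≠ y) {u v : W}
    (p : (merge K x y).Walk u v) (h : y ∈ p.support) : u = y := by
  induction p with
  | nil =>
    simp only [SimpleGraph.Walk.support_nil, List.mem_singleton] at h
    exact h.symm
  | @cons a b c h' p' ih =>
    rw [SimpleGraph.Walk.support_cons, List.mem_cons] at h
    rcases h with h | h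
    · exact h.symm
    · exact absurd h'.symm (by rw [ih h]; exact merge_y_isolated hxy a)

lemma merge_edge_lt {K : SimpleGraph W} {x y : W} (hxy : K.Adj x y) :
    (merge K x y).edgeSet.ncard < K.edgeSet.ncard := by
  have h1 : (merge K x y).edgeSet =
      (Sym2.map (mp x y) '' K.edgeSet) \ {e : Sym2 W | e.IsDiag} := by
    rw [merge, SimpleGraph.edgeSet_fromEdgeSet]; rfl
  have hxx : s(x, x) ∈ Sym2.map (mp x y) '' K.edgeSet := by
    refine ⟨s(x, y), hxy, ?_⟩
    rw [Sym2.map_pair_eq, mp_x, mp_y]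
  have h2 : (merge K x y).edgeSet ⊆ (Sym2.map (mp x y) '' K.edgeSet) \ {s(x, x)} := by
    rw [h1]
    intro e he
    refine ⟨he.1, ?_⟩
    intro hcon
    apply he.2
    rw [Set.mem_singleton_iff] at hcon
    rw [hcon]
    exact Sym2.mk_isDiag_iff.mpr rfl
  calc (merge K x y).edgeSet.ncard
      ≤ ((Sym2.map (mp x y) '' K.edgeSet) \ {s(x, x)}).ncard :=
        Set.ncard_le_ncard h2 ((Set.toFinite _).diff)
    _ < (Sym2.map (mp x y) '' K.edgeSet).ncard :=
        Set.ncard_diff_singleton_lt_of_mem hxx (Set.toFinite _)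
    _ ≤ K.edgeSet.ncard := Set.ncard_image_le (Set.toFinite _)

/-- Projection of a walk along the merge map. -/
lemma merge_walk_proj {K : SimpleGraph W} {x y : W} {u v : W} (p : K.Walk u v) :
    ∃ q : (merge K x y).Walk (mp x y u) (mp x y v),
      ∀ w ∈ q.support, ∃ z ∈ p.support, mp x y z = w := by
  induction p with
  | nil => exact ⟨.nil, by simp⟩
  | @cons a b c h' p' ih =>
    obtain ⟨q', hq'⟩ := ih
    by_cases heq : mp x y a = mp x y b
    · refine ⟨q'.copy heq.symm rfl, ?_⟩
      intro w hw
      rw [SimpleGraph.Walk.support_copy] at hw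
      obtain ⟨z, hz, hz2⟩ := hq' w hw
      exact ⟨z, by rw [SimpleGraph.Walk.support_cons]; exact List.mem_cons_of_mem _ hz, hz2⟩
    · have hadj : (merge K x y).Adj (mp x y a) (mp x y b) := by
        rw [merge_adj]
        exact ⟨⟨s(a, b), h', by rw [Sym2.map_pair_eq]⟩, heq⟩
      refine ⟨.cons hadj q', ?_⟩
      intro w hw
      rw [SimpleGraph.Walk.support_cons, List.mem_cons] at hw
      rcases hw with rfl | hw
      · exact ⟨a, by rw [SimpleGraph.Walk.support_cons]; exact List.mem_cons_self, rfl⟩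
      · obtain ⟨z, hz, hz2⟩ := hq' w hw
        exact ⟨z, by rw [SimpleGraph.Walk.support_cons]; exact List.mem_cons_of_mem _ hz, hz2⟩

/-- One merge-edge lifts to a short walk in `K`. -/
lemma merge_adj_lift {K : SimpleGraph W} {x y : W} (hxy : K.Adj x y) {u v : W}
    (h : (merge K x y).Adj u v) :
    ∃ q : K.Walk u v, (∀ w ∈ q.support, w = u ∨ w = v ∨ w = y) ∧
      (y ∈ q.support → (u = x ∨ v = x)) := by
  rw [merge_adj] at h
  obtain ⟨⟨e, he, hmap⟩, hne⟩ := h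
  induction e with
  | h a b =>
    rw [Sym2.map_pair_eq, Sym2.eq_iff] at hmap
    have hyx : x ≠ y := hxy.ne
    -- we handle the two orientations symmetrically
    have main : ∀ a b : W, K.Adj a b → mp x y a = u → mp x y b = v →
        ∃ q : K.Walk u v, (∀ w ∈ q.support, w = u ∨ w = v ∨ w = y) ∧
          (y ∈ q.support → (u = x ∨ v = x)) := by
      intro a b hab ha hb
      by_cases hay : a = y
      · -- u = x, edge y b with b ≠ y
        have hu : u = x := by rw [← ha, hay, mp_y]
        have hbny : b ≠ y := (show K.Adj y b from hay ▸ hab).ne'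
        have hbv : b = v := by rw [← hb, mp_of_ne hbny]
        subst hu; subst hbv
        have hyb : K.Adj y b := hay ▸ hab
        refine ⟨.cons hxy (.cons hyb .nil), ?_, fun _ => Or.inl rfl⟩
        intro w hw
        simp only [SimpleGraph.Walk.support_cons, SimpleGraph.Walk.support_nil,
          List.mem_cons, List.mem_singleton] at hw
        rcases hw with rfl | rfl | rfl | h
        · exact Or.inl rfl
        · exact Or.inr (Or.inr rfl)
        · exact Or.inr (Or.inl rfl)
        · exact absurd h (by simp)
      · by_cases hby : b = y
        · have hv : v = x := by rw [← hb, hby, mp_y]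
          have hau : a = u := by rw [← ha, mp_of_ne hay]
          subst hv; subst hau
          have hay' : K.Adj a y := hby ▸ hab
          refine ⟨.cons hay' (.cons hxy.symm .nil), ?_, fun _ => Or.inr rfl⟩
          intro w hw
          simp only [SimpleGraph.Walk.support_cons, SimpleGraph.Walk.support_nil,
            List.mem_cons, List.mem_singleton] at hw
          rcases hw with rfl | rfl | rfl | h
          · exact Or.inl rfl
          · exact Or.inr (Or.inr rfl)
          · exact Or.inr (Or.inl rfl)
          · exact absurd h (by simp)
        · have hau : a = u := by rw [← ha, mp_of_ne hay]
          have hbv : b = v := by rw [← hb, mp_of_ne hby]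
          subst hau; subst hbv
          refine ⟨.cons hab .nil, ?_, ?_⟩
          · intro w hw
            simp only [SimpleGraph.Walk.support_cons, SimpleGraph.Walk.support_nil,
              List.mem_cons, List.mem_singleton] at hw
            rcases hw with rfl | rfl | h
            · exact Or.inl rfl
            · exact Or.inr (Or.inl rfl)
            · exact absurd h (by simp)
          · intro hy
            simp only [SimpleGraph.Walk.support_cons, SimpleGraph.Walk.support_nil,
              List.mem_cons, List.mem_singleton] at hy
            rcases hy with rfl | rfl | h
            · exact absurd rfl hay
            · exact absurd rfl hby
            · exact absurd h (by simp)
    rcases hmap with ⟨h1, h2⟩ | ⟨h1, h2⟩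
    · exact main a b he h1 h2
    · exact main b a he.symm h2 h1

/-- Lifting a merge-walk to a `K`-walk. -/
lemma merge_walk_lift {K : SimpleGraph W} {x y : W} (hxy : K.Adj x y) {u v : W}
    (p : (merge K x y).Walk u v) :
    ∃ q : K.Walk u v, (∀ s ∈ q.support, s ∈ p.support ∨ s = y) ∧
      (y ∈ q.support → x ∈ p.support ∨ u = y) := by
  induction p with
  | nil =>
    refine ⟨.nil, by simp, ?_⟩
    intro h
    simp only [SimpleGraph.Walk.support_nil, List.mem_singleton] at h
    exact Or.inr h.symm
  | @cons a d c h' p' ih =>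
    obtain ⟨q', hq'1, hq'2⟩ := ih
    obtain ⟨e0, he1, he2⟩ := merge_adj_lift hxy h'
    refine ⟨e0.append q', ?_, ?_⟩
    · intro s hs
      have hs' : s ∈ e0.support ∨ s ∈ q'.support := by
        rw [SimpleGraph.Walk.support_append, List.mem_append] at hs
        exact hs.imp id List.mem_of_mem_tail
      rcases hs' with hs' | hs'
      · rcases he1 s hs' with rfl | rfl | rfl
        · exact Or.inl (by rw [SimpleGraph.Walk.support_cons]; exact List.mem_cons_self)
        · refine Or.inl ?_
          rw [SimpleGraph.Walk.support_cons]
          exact List.mem_cons_of_mem _ p'.start_mem_support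
        · exact Or.inr rfl
      · rcases hq'1 s hs' with hs2 | hs2
        · refine Or.inl ?_
          rw [SimpleGraph.Walk.support_cons]
          exact List.mem_cons_of_mem _ hs2
        · exact Or.inr hs2
    · intro hy
      refine Or.inl ?_
      have hy' : y ∈ e0.support ∨ y ∈ q'.support := by
        rw [SimpleGraph.Walk.support_append, List.mem_append] at hy
        exact hy.imp id List.mem_of_mem_tail
      rw [SimpleGraph.Walk.support_cons]
      rcases hy' with hy' | hy'
      · rcases he2 hy' with rfl | rfl
        · exact List.mem_cons_self
        · exact List.mem_cons_of_mem _ p'.start_mem_support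
      · rcases hq'2 hy' with hx | heq
        · exact List.mem_cons_of_mem _ hx
        · exact absurd (show (merge K x y).Adj a y from heq ▸ h').symm
            (merge_y_isolated hxy.ne a)

end Menger

section Menger2

variable {W : Type*} [Fintype W] [DecidableEq W]

/-- There is an `A`–`B` walk avoiding `Z`. -/
def Conn (K : SimpleGraph W) (A B : Finset W) (Z : Finset W) : Prop :=
  ∃ (a b : W) (p : K.Walk a b), a ∈ A ∧ b ∈ B ∧ ∀ v ∈ p.support, v ∉ Z

/-- No single vertex separates `A` from `B`. -/
def Hyp (K : SimpleGraph W) (A B : Finset W) : Prop :=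
  ∀ Z : Finset W, Z.card ≤ 1 → Conn K A B Z

/-- There are two disjoint `A`–`B` walks. -/
def Concl (K : SimpleGraph W) (A B : Finset W) : Prop :=
  ∃ (a₁ b₁ a₂ b₂ : W) (p : K.Walk a₁ b₁) (q : K.Walk a₂ b₂),
    a₁ ∈ A ∧ b₁ ∈ B ∧ a₂ ∈ A ∧ b₂ ∈ B ∧ ∀ v ∈ p.support, v ∉ q.support

lemma support_mapLe {K K' : SimpleGraph W} (h : K ≤ K') {a b : W} (p : K.Walk a b) :
    (p.mapLe h).support = p.support := by
  simp only [SimpleGraph.Walk.mapLe, SimpleGraph.Walk.support_map]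
  exact List.map_id' _

lemma mem_support_append {K : SimpleGraph W} {a b c : W} {p : K.Walk a b} {q : K.Walk b c}
    {v : W} (h : v ∈ (p.append q).support) : v ∈ p.support ∨ v ∈ q.support := by
  rw [SimpleGraph.Walk.support_append, List.mem_append] at h
  exact h.imp id List.mem_of_mem_tail

lemma walk_edgeless {K : SimpleGraph W} (h : ∀ u v, ¬K.Adj u v) {a b : W} (p : K.Walk a b) :
    p.support = [a] := by
  cases p with
  | nil => simp
  | cons h' _ => exact absurd h' (h _ _)

lemma menger_edgeless {K : SimpleGraph W} {A B : Finset W} (h : ∀ u v, ¬K.Adj u v)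
    (hyp : Hyp K A B) : Concl K A B := by
  obtain ⟨a, b, p, ha, hb, _⟩ := hyp ∅ (by simp)
  obtain ⟨a', b', p', ha', hb', hav⟩ := hyp {a} (by simp)
  refine ⟨a, b, a', b', p, p', ha, hb, ha', hb', ?_⟩
  intro v hv
  rw [walk_edgeless h p] at hv
  rw [walk_edgeless h p']
  simp only [List.mem_singleton] at hv ⊢
  intro hcon
  exact hav a' p'.start_mem_support (by rw [← hcon, hv]; exact Finset.mem_singleton_self a)

/-- Image of a finset under the merge map. -/
def pA (A : Finset W) (x y : W) : Finset W := if y ∈ A then insert x (A.erase y) else A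

lemma mem_pA_of {A : Finset W} {x y a : W} (ha : a ∈ A) : mp x y a ∈ pA A x y := by
  unfold pA
  by_cases hay : a = y
  · rw [hay, mp_y, if_pos (hay ▸ ha)]
    exact Finset.mem_insert_self _ _
  · rw [mp_of_ne hay]
    by_cases hyA : y ∈ A
    · rw [if_pos hyA]
      exact Finset.mem_insert_of_mem (Finset.mem_erase.mpr ⟨hay, ha⟩)
    · rw [if_neg hyA]; exact ha

lemma y_not_mem_pA {A : Finset W} {x y : W} (hxy : x ≠ y) : y ∉ pA A x y := by
  unfold pA
  by_cases hyA : y ∈ A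
  · rw [if_pos hyA]
    intro h
    rcases Finset.mem_insert.mp h with h | h
    · exact hxy h.symm
    · exact (Finset.mem_erase.mp h).1 rfl
  · rw [if_neg hyA]; exact hyA

lemma mem_of_mem_pA {A : Finset W} {x y a : W} (h : a ∈ pA A x y) :
    a ∈ A ∨ (a = x ∧ y ∈ A) := by
  unfold pA at h
  by_cases hyA : y ∈ A
  · rw [if_pos hyA] at h
    rcases Finset.mem_insert.mp h with h | h
    · exact Or.inr ⟨h, hyA⟩
    · exact Or.inl (Finset.mem_erase.mp h).2
  · rw [if_neg hyA] at h; exact Or.inl h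

lemma conn_proj {K : SimpleGraph W} {A B Z : Finset W} {x y : W} (hxZ : x ∉ Z)
    (h : Conn K A B Z) : Conn (merge K x y) (pA A x y) (pA B x y) Z := by
  obtain ⟨a, b, p, ha, hb, hav⟩ := h
  obtain ⟨q, hq⟩ := merge_walk_proj (x := x) (y := y) p
  refine ⟨mp x y a, mp x y b, q, mem_pA_of ha, mem_pA_of hb, ?_⟩
  intro v hv
  obtain ⟨z, hz, rfl⟩ := hq v hv
  by_cases hzy : z = y
  · rw [hzy, mp_y]; exact hxZ
  · rw [mp_of_ne hzy]; exact hav z hz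

lemma conn_proj_xy {K : SimpleGraph W} {A B : Finset W} {x y : W}
    (h : Conn K A B {x, y}) : Conn (merge K x y) (pA A x y) (pA B x y) {x} := by
  obtain ⟨a, b, p, ha, hb, hav⟩ := h
  obtain ⟨q, hq⟩ := merge_walk_proj (x := x) (y := y) p
  refine ⟨mp x y a, mp x y b, q, mem_pA_of ha, mem_pA_of hb, ?_⟩
  intro v hv
  obtain ⟨z, hz, rfl⟩ := hq v hv
  have hz2 := hav z hz
  have hzy : z ≠ y := fun hh => hz2 (by
    rw [hh]; exact Finset.mem_insert_of_mem (Finset.mem_singleton_self _))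
  rw [mp_of_ne hzy]
  intro hcon
  rw [Finset.mem_singleton] at hcon
  exact hz2 (by rw [hcon]; exact Finset.mem_insert_self _ _)

lemma hyp_AS {K : SimpleGraph W} {A B : Finset W} {x y : W} (hxy : K.Adj x y)
    (h : Hyp K A B) (hsep : ¬Conn K A B {x, y}) :
    Hyp (K.deleteEdges {s(x, y)}) A {x, y} := by
  intro T hT
  obtain ⟨a, b, p, ha, hb, hav⟩ := h T hT
  have hmeet : ∃ v ∈ p.support, v ∈ (↑({x, y} : Finset W) : Set W) := by
    by_contra hcon
    push_neg at hcon
    exact hsep ⟨a, b, p, ha, hb, fun v hv hmem => hcon v hv (by exact_mod_cast hmem)⟩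
  obtain ⟨c, q, hcS, hsup, _, honly, _⟩ := walk_firstHit p _ hmeet
  have hefree : ∀ e ∈ q.edges, e ∉ ({s(x, y)} : Set (Sym2 W)) := by
    intro e he hecon
    rw [Set.mem_singleton_iff] at hecon
    subst hecon
    have hx := q.fst_mem_support_of_mem_edges he
    have hy2 := q.snd_mem_support_of_mem_edges he
    have h1 := honly x hx (by simp)
    have h2 := honly y hy2 (by simp)
    exact hxy.ne (h1.trans h2.symm)
  refine ⟨a, c, q.toDeleteEdges _ hefree, ha, by exact_mod_cast hcS, ?_⟩
  intro v hv
  rw [SimpleGraph.Walk.support_transfer] at hv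
  exact hav v (hsup v hv)

lemma hyp_SB {K : SimpleGraph W} {A B : Finset W} {x y : W} (hxy : K.Adj x y)
    (h : Hyp K A B) (hsep : ¬Conn K A B {x, y}) :
    Hyp (K.deleteEdges {s(x, y)}) {x, y} B := by
  intro T hT
  obtain ⟨a, b, p, ha, hb, hav⟩ := h T hT
  have hmeet : ∃ v ∈ p.reverse.support, v ∈ (↑({x, y} : Finset W) : Set W) := by
    by_contra hcon
    push_neg at hcon
    rw [SimpleGraph.Walk.support_reverse] at hcon
    exact hsep ⟨a, b, p, ha, hb, fun v hv hmem =>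
      hcon v (List.mem_reverse.mpr hv) (by exact_mod_cast hmem)⟩
  obtain ⟨c, q, hcS, hsup, _, honly, _⟩ := walk_firstHit p.reverse _ hmeet
  have hefree : ∀ e ∈ q.edges, e ∉ ({s(x, y)} : Set (Sym2 W)) := by
    intro e he hecon
    rw [Set.mem_singleton_iff] at hecon
    subst hecon
    have hx := q.fst_mem_support_of_mem_edges he
    have hy2 := q.snd_mem_support_of_mem_edges he
    have h1 := honly x hx (by simp)
    have h2 := honly y hy2 (by simp)
    exact hxy.ne (h1.trans h2.symm)
  refine ⟨c, b, (q.toDeleteEdges _ hefree).reverse, by exact_mod_cast hcS, hb, ?_⟩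
  intro v hv
  rw [SimpleGraph.Walk.support_reverse, List.mem_reverse,
    SimpleGraph.Walk.support_transfer] at hv
  have hv2 := hsup v hv
  rw [SimpleGraph.Walk.support_reverse, List.mem_reverse] at hv2
  exact hav v hv2

lemma cross_aux {K' K : SimpleGraph W} (hle : K' ≤ K) {A B : Finset W} {x y : W}
    (hsep : ¬Conn K A B {x, y}) {a b c d : W}
    (ha : a ∈ A) (hb : b ∈ B)
    (P : K'.Walk a c) (Q : K'.Walk d b)
    (hcS : c = x ∨ c = y) (hdS : d = x ∨ d = y)
    (hPonly : ∀ v ∈ P.support, (v = x ∨ v = y) → v = c)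
    (hPcount : P.support.count c = 1)
    (hQonly : ∀ v ∈ Q.support, (v = x ∨ v = y) → v = d)
    (hQcount : Q.support.count d = 1) :
    ∀ v ∈ P.support, v ∈ Q.support → (v = c ∧ v = d) := by
  intro v hvP hvQ
  by_cases hvS : v = x ∨ v = y
  · exact ⟨hPonly v hvP hvS, hQonly v hvQ hvS⟩
  exfalso
  have hvc : v ≠ c := by rintro rfl; exact hvS hcS
  have hvd : v ≠ d := by rintro rfl; exact hvS hdS
  have hPsplit : P.support = (P.takeUntil v hvP).support ++ (P.dropUntil v hvP).support.tail := by
    conv_lhs => rw [← P.take_spec hvP]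
    rw [SimpleGraph.Walk.support_append]
  have hcdrop : c ∈ (P.dropUntil v hvP).support.tail := by
    have h1 := (P.dropUntil v hvP).support_eq_cons
    have h2 : c ∈ (P.dropUntil v hvP).support := SimpleGraph.Walk.end_mem_support _
    rw [h1, List.mem_cons] at h2
    exact h2.resolve_left (fun hh => hvc hh.symm)
  have hcR : c ∉ (P.takeUntil v hvP).support := by
    rw [← List.count_eq_zero (a := c)]
    have h3 : 0 < ((P.dropUntil v hvP).support.tail).count c := List.count_pos_iff.mpr hcdrop
    have h4 : P.support.count c =
        (P.takeUntil v hvP).support.count c + ((P.dropUntil v hvP).support.tail).count c := by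
      rw [hPsplit, List.count_append]
    omega
  have hQsplit : Q.support = (Q.takeUntil v hvQ).support ++ (Q.dropUntil v hvQ).support.tail := by
    conv_lhs => rw [← Q.take_spec hvQ]
    rw [SimpleGraph.Walk.support_append]
  have hdtake : d ∈ (Q.takeUntil v hvQ).support := SimpleGraph.Walk.start_mem_support _
  have hdR : d ∉ (Q.dropUntil v hvQ).support := by
    intro hd
    have h1 := (Q.dropUntil v hvQ).support_eq_cons
    rw [h1, List.mem_cons] at hd
    have hd2 : d ∈ (Q.dropUntil v hvQ).support.tail := hd.resolve_left (fun hh => hvd hh.symm)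
    have h3 : 0 < ((Q.dropUntil v hvQ).support.tail).count d := List.count_pos_iff.mpr hd2
    have h4 : 0 < ((Q.takeUntil v hvQ).support).count d := List.count_pos_iff.mpr hdtake
    have h5 : Q.support.count d =
        (Q.takeUntil v hvQ).support.count d + ((Q.dropUntil v hvQ).support.tail).count d := by
      rw [hQsplit, List.count_append]
    omega
  have hRav : ∀ u ∈ ((P.takeUntil v hvP).append (Q.dropUntil v hvQ)).support,
      u ∉ ({x, y} : Finset W) := by
    intro u hu hmem
    have hu' := mem_support_append hu
    have huS : u = x ∨ u = y := by
      rcases Finset.mem_insert.mp hmem with h | h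
      · exact Or.inl h
      · exact Or.inr (Finset.mem_singleton.mp h)
    rcases hu' with hu' | hu'
    · have heq := hPonly u (SimpleGraph.Walk.support_takeUntil_subset _ _ hu') huS
      exact hcR (heq ▸ hu')
    · have heq := hQonly u (SimpleGraph.Walk.support_dropUntil_subset _ _ hu') huS
      exact hdR (heq ▸ hu')
  refine hsep ⟨a, b, ((P.takeUntil v hvP).append (Q.dropUntil v hvQ)).mapLe hle, ha, hb, ?_⟩
  intro u hu
  rw [support_mapLe] at hu
  exact hRav u hu

lemma glue {K' K : SimpleGraph W} (hle : K' ≤ K) {A B : Finset W} {x y a₁ a₂ b₁ b₂ : W}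
    (hxy : x ≠ y)
    (hsep : ¬Conn K A B {x, y})
    (ha₁ : a₁ ∈ A) (ha₂ : a₂ ∈ A) (hb₁ : b₁ ∈ B) (hb₂ : b₂ ∈ B)
    (P₁ : K'.Walk a₁ x) (P₂ : K'.Walk a₂ y) (Q₁ : K'.Walk x b₁) (Q₂ : K'.Walk y b₂)
    (hP₁only : ∀ v ∈ P₁.support, (v = x ∨ v = y) → v = x)
    (hP₁count : P₁.support.count x = 1)
    (hP₂only : ∀ v ∈ P₂.support, (v = x ∨ v = y) → v = y)
    (hP₂count : P₂.support.count y = 1)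
    (hQ₁only : ∀ v ∈ Q₁.support, (v = x ∨ v = y) → v = x)
    (hQ₁count : Q₁.support.count x = 1)
    (hQ₂only : ∀ v ∈ Q₂.support, (v = x ∨ v = y) → v = y)
    (hQ₂count : Q₂.support.count y = 1)
    (hPdisj : ∀ v ∈ P₁.support, v ∉ P₂.support)
    (hQdisj : ∀ v ∈ Q₁.support, v ∉ Q₂.support) :
    Concl K' A B := by
  have c12 := cross_aux hle hsep ha₁ hb₂ P₁ Q₂ (Or.inl rfl) (Or.inr rfl)
    hP₁only hP₁count hQ₂only hQ₂count
  have c21 := cross_aux hle hsep ha₂ hb₁ P₂ Q₁ (Or.inr rfl) (Or.inl rfl)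
    hP₂only hP₂count hQ₁only hQ₁count
  refine ⟨a₁, b₁, a₂, b₂, P₁.append Q₁, P₂.append Q₂, ha₁, hb₁, ha₂, hb₂, ?_⟩
  intro v hv hv2
  have h1 := mem_support_append hv
  have h2 := mem_support_append hv2
  rcases h1 with h1 | h1 <;> rcases h2 with h2 | h2
  · exact hPdisj v h1 h2
  · exact hxy ((c12 v h1 h2).1.symm.trans (c12 v h1 h2).2)
  · exact hxy ((c21 v h2 h1).2.symm.trans (c21 v h2 h1).1)
  · exact hQdisj v h1 h2

lemma trim_end {K' : SimpleGraph W} {a s₀ x y : W} (P : K'.Walk a s₀)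
    (hs : s₀ ∈ ({x, y} : Finset W)) :
    ∃ (c : W) (P' : K'.Walk a c), (c = x ∨ c = y) ∧
      (∀ v ∈ P'.support, v ∈ P.support) ∧
      (∀ v ∈ P'.support, (v = x ∨ v = y) → v = c) ∧ P'.support.count c = 1 := by
  have hmeet : ∃ v ∈ P.support, v ∈ (↑({x, y} : Finset W) : Set W) :=
    ⟨s₀, P.end_mem_support, by exact_mod_cast hs⟩
  obtain ⟨c, q, h1, h2, _, h4, h5⟩ := walk_firstHit P _ hmeet
  refine ⟨c, q, ?_, h2, ?_, h5⟩
  · have hc : c ∈ ({x, y} : Finset W) := by exact_mod_cast h1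
    rcases Finset.mem_insert.mp hc with h | h
    · exact Or.inl h
    · exact Or.inr (Finset.mem_singleton.mp h)
  · intro v hv hvS
    apply h4 v hv
    show v ∈ (↑({x, y} : Finset W) : Set W)
    rcases hvS with rfl | rfl
    · exact_mod_cast Finset.mem_insert_self _ _
    · exact_mod_cast Finset.mem_insert_of_mem (Finset.mem_singleton_self _)

lemma trim_start {K' : SimpleGraph W} {s₀ b x y : W} (Q : K'.Walk s₀ b)
    (hs : s₀ ∈ ({x, y} : Finset W)) :
    ∃ (d : W) (Q' : K'.Walk d b), (d = x ∨ d = y) ∧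
      (∀ v ∈ Q'.support, v ∈ Q.support) ∧
      (∀ v ∈ Q'.support, (v = x ∨ v = y) → v = d) ∧ Q'.support.count d = 1 := by
  obtain ⟨c, P', hc, hsub, honly, hcount⟩ := trim_end Q.reverse hs
  refine ⟨c, P'.reverse, hc, ?_, ?_, ?_⟩
  · intro v hv
    rw [SimpleGraph.Walk.support_reverse, List.mem_reverse] at hv
    have := hsub v hv
    rw [SimpleGraph.Walk.support_reverse, List.mem_reverse] at this
    exact this
  · intro v hv hvS
    rw [SimpleGraph.Walk.support_reverse, List.mem_reverse] at hv
    exact honly v hv hvS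
  · rw [SimpleGraph.Walk.support_reverse, List.count_reverse]
    exact hcount

/-- Endpoint fixing for lifted walks: move a start at `x` back to `y` if needed. -/
lemma fix_start {K : SimpleGraph W} {x y : W} (hxy : K.Adj x y) {A : Finset W} {a b : W}
    (w : K.Walk a b) (ha : a ∈ A ∨ (a = x ∧ y ∈ A)) :
    ∃ (a' : W) (w' : K.Walk a' b), a' ∈ A ∧ (∀ v ∈ w'.support, v ∈ w.support ∨ v = y) ∧
      (y ∈ w'.support → y ∈ w.support ∨ x ∈ w.support) := by
  rcases ha with ha | ⟨rfl, hyA⟩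
  · exact ⟨a, w, ha, fun v hv => Or.inl hv, fun h => Or.inl h⟩
  · refine ⟨y, .cons hxy.symm w, hyA, ?_, fun _ => Or.inr w.start_mem_support⟩
    intro v hv
    rw [SimpleGraph.Walk.support_cons, List.mem_cons] at hv
    rcases hv with rfl | hv
    · exact Or.inr rfl
    · exact Or.inl hv

lemma fix_end {K : SimpleGraph W} {x y : W} (hxy : K.Adj x y) {B : Finset W} {a b : W}
    (w : K.Walk a b) (hb : b ∈ B ∨ (b = x ∧ y ∈ B)) :
    ∃ (b' : W) (w' : K.Walk a b'), b' ∈ B ∧ (∀ v ∈ w'.support, v ∈ w.support ∨ v = y) ∧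
      (y ∈ w'.support → y ∈ w.support ∨ x ∈ w.support) := by
  rcases hb with hb | ⟨rfl, hyB⟩
  · exact ⟨b, w, hb, fun v hv => Or.inl hv, fun h => Or.inl h⟩
  · refine ⟨y, w.append (.cons hxy .nil), hyB, ?_, fun _ => Or.inr w.end_mem_support⟩
    intro v hv
    rcases mem_support_append hv with hv | hv
    · exact Or.inl hv
    · simp only [SimpleGraph.Walk.support_cons, SimpleGraph.Walk.support_nil,
        List.mem_cons, List.mem_singleton] at hv
      rcases hv with rfl | rfl | h
      · exact Or.inl w.end_mem_support
      · exact Or.inr rfl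
      · exact absurd h (by simp)

lemma Concl.mono {K K' : SimpleGraph W} {A B : Finset W} (h : Concl K A B) (hle : K ≤ K') :
    Concl K' A B := by
  obtain ⟨a₁, b₁, a₂, b₂, p, q, h1, h2, h3, h4, hdisj⟩ := h
  refine ⟨a₁, b₁, a₂, b₂, p.mapLe hle, q.mapLe hle, h1, h2, h3, h4, ?_⟩
  intro v hv
  rw [support_mapLe] at hv ⊢
  exact hdisj v hv

theorem menger_core : ∀ (n : ℕ) (K : SimpleGraph W) (A B : Finset W),
    K.edgeSet.ncard ≤ n → Hyp K A B → Concl K A B := by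
  intro n
  induction n with
  | zero =>
    intro K A B hcard hyp
    refine menger_edgeless ?_ hyp
    intro u v huv
    have h1 : K.edgeSet.Nonempty := ⟨s(u, v), huv⟩
    have h2 := (Set.ncard_pos (Set.toFinite _)).mpr h1
    omega
  | succ n ih =>
    intro K A B hcard hyp
    by_cases hedge : ∃ u v, K.Adj u v
    swap
    · push_neg at hedge; exact menger_edgeless hedge hyp
    obtain ⟨x, y, hxy⟩ := hedge
    by_cases hypm : Hyp (merge K x y) (pA A x y) (pA B x y)
    · -- contraction case
      have hlt := merge_edge_lt hxy
      obtain ⟨a₁, b₁, a₂, b₂, p, q, h1, h2, h3, h4, hdisj⟩ :=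
        ih (merge K x y) _ _ (by omega) hypm
      obtain ⟨p', hp'1, hp'2⟩ := merge_walk_lift hxy p
      obtain ⟨q', hq'1, hq'2⟩ := merge_walk_lift hxy q
      have hyA : y ∉ pA A x y := y_not_mem_pA hxy.ne
      have hyp_sup : y ∉ p.support := fun h => hyA ((merge_y_support hxy.ne p h) ▸ h1)
      have hyq_sup : y ∉ q.support := fun h => hyA ((merge_y_support hxy.ne q h) ▸ h3)
      have ha₁y : a₁ ≠ y := fun h => hyA (h ▸ h1)
      have ha₂y : a₂ ≠ y := fun h => hyA (h ▸ h3)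
      obtain ⟨a₁', p₂, hA1, hsub1, hy1⟩ := fix_start hxy p' (mem_of_mem_pA h1)
      obtain ⟨b₁', p₃, hB1, hsub2, hy2⟩ := fix_end hxy p₂ (mem_of_mem_pA h2)
      obtain ⟨a₂', q₂, hA2, hsub3, hy3⟩ := fix_start hxy q' (mem_of_mem_pA h3)
      obtain ⟨b₂', q₃, hB2, hsub4, hy4⟩ := fix_end hxy q₂ (mem_of_mem_pA h4)
      -- chained support properties
      have prop1p : ∀ v ∈ p₃.support, v ∈ p.support ∨ v = y := by
        intro v hv
        rcases hsub2 v hv with hv | hv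
        · rcases hsub1 v hv with hv | hv
          · exact hp'1 v hv
          · exact Or.inr hv
        · exact Or.inr hv
      have prop2p' : y ∈ p'.support → x ∈ p.support := by
        intro h
        rcases hp'2 h with h | h
        · exact h
        · exact absurd h ha₁y
      have prop2p'' : y ∈ p₂.support → x ∈ p.support := by
        intro h
        rcases hy1 h with h | h
        · exact prop2p' h
        · rcases hp'1 x h with h | h
          · exact h
          · exact absurd h hxy.ne
      have prop2p : y ∈ p₃.support → x ∈ p.support := by
        intro h
        rcases hy2 h with h | h
        · exact prop2p'' h
        · rcases hsub1 x h with h | h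
          · rcases hp'1 x h with h | h
            · exact h
            · exact absurd h hxy.ne
          · exact absurd h hxy.ne
      have prop1q : ∀ v ∈ q₃.support, v ∈ q.support ∨ v = y := by
        intro v hv
        rcases hsub4 v hv with hv | hv
        · rcases hsub3 v hv with hv | hv
          · exact hq'1 v hv
          · exact Or.inr hv
        · exact Or.inr hv
      have prop2q' : y ∈ q'.support → x ∈ q.support := by
        intro h
        rcases hq'2 h with h | h
        · exact h
        · exact absurd h ha₂y
      have prop2q'' : y ∈ q₂.support → x ∈ q.support := by
        intro h
        rcases hy3 h with h | h
        · exact prop2q' h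
        · rcases hq'1 x h with h | h
          · exact h
          · exact absurd h hxy.ne
      have prop2q : y ∈ q₃.support → x ∈ q.support := by
        intro h
        rcases hy4 h with h | h
        · exact prop2q'' h
        · rcases hsub3 x h with h | h
          · rcases hq'1 x h with h | h
            · exact h
            · exact absurd h hxy.ne
          · exact absurd h hxy.ne
      refine ⟨a₁', b₁', a₂', b₂', p₃, q₃, hA1, hB1, hA2, hB2, ?_⟩
      intro v hv hv2
      rcases prop1p v hv with hvp | hveq
      · rcases prop1q v hv2 with hvq | hveq
        · exact hdisj v hvp hvq
        · exact hyp_sup (hveq ▸ hvp)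
      · have hx1 : x ∈ p.support := prop2p (hveq ▸ hv)
        have hx2 : x ∈ q.support := prop2q (hveq ▸ hv2)
        exact hdisj x hx1 hx2
    · -- separator case
      rw [Hyp] at hypm
      push_neg at hypm
      obtain ⟨Z, hZcard, hZsep⟩ := hypm
      by_cases hxZ : x ∈ Z
      swap
      · exact absurd (conn_proj hxZ (hyp Z hZcard)) hZsep
      have hZeq : Z = {x} := Finset.eq_singleton_iff_unique_mem.mpr
        ⟨hxZ, fun b hb => Finset.card_le_one.mp hZcard b hb x hxZ⟩
      have hsepxy : ¬Conn K A B {x, y} := fun hc => hZsep (hZeq ▸ conn_proj_xy hc)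
      have hEne : (K.deleteEdges {s(x, y)}).edgeSet.ncard ≤ n := by
        rw [SimpleGraph.edgeSet_deleteEdges]
        have h1 : s(x, y) ∈ K.edgeSet := hxy
        have h2 := Set.ncard_diff_singleton_lt_of_mem h1 (Set.toFinite _)
        omega
      obtain ⟨A₁, S₁, A₂, S₂, P₁, P₂, hA1, hS1, hA2, hS2, hPdisj⟩ :=
        ih _ A {x, y} hEne (hyp_AS hxy hyp hsepxy)
      obtain ⟨D₁, B₁, D₂, B₂, Q₁, Q₂, hD1, hB1, hD2, hB2, hQdisj⟩ :=
        ih _ {x, y} B hEne (hyp_SB hxy hyp hsepxy)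
      obtain ⟨c₁, P₁', hc₁, hP₁sub, hP₁only, hP₁count⟩ := trim_end P₁ hS1
      obtain ⟨c₂, P₂', hc₂, hP₂sub, hP₂only, hP₂count⟩ := trim_end P₂ hS2
      obtain ⟨d₁, Q₁', hd₁, hQ₁sub, hQ₁only, hQ₁count⟩ := trim_start Q₁ hD1
      obtain ⟨d₂, Q₂', hd₂, hQ₂sub, hQ₂only, hQ₂count⟩ := trim_start Q₂ hD2
      have hle : K.deleteEdges {s(x, y)} ≤ K := SimpleGraph.deleteEdges_le _
      have hPdisj' : ∀ v ∈ P₁'.support, v ∉ P₂'.support :=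
        fun v hv hv2 => hPdisj v (hP₁sub v hv) (hP₂sub v hv2)
      have hPdisj'' : ∀ v ∈ P₂'.support, v ∉ P₁'.support :=
        fun v hv hv2 => hPdisj' v hv2 hv
      have hQdisj' : ∀ v ∈ Q₁'.support, v ∉ Q₂'.support :=
        fun v hv hv2 => hQdisj v (hQ₁sub v hv) (hQ₂sub v hv2)
      have hQdisj'' : ∀ v ∈ Q₂'.support, v ∉ Q₁'.support :=
        fun v hv hv2 => hQdisj' v hv2 hv
      have hc12 : c₁ ≠ c₂ := fun h =>
        hPdisj' c₁ P₁'.end_mem_support (by rw [h]; exact P₂'.end_mem_support)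
      have hd12 : d₁ ≠ d₂ := fun h =>
        hQdisj' d₁ Q₁'.start_mem_support (by rw [h]; exact Q₂'.start_mem_support)
      have hsepyx : ¬Conn K A B {y, x} := by rw [Finset.pair_comm]; exact hsepxy
      have hP₁only2 : ∀ v ∈ P₁'.support, (v = y ∨ v = x) → v = c₁ :=
        fun v hv h => hP₁only v hv h.symm
      have hP₂only2 : ∀ v ∈ P₂'.support, (v = y ∨ v = x) → v = c₂ :=
        fun v hv h => hP₂only v hv h.symm
      have hQ₁only2 : ∀ v ∈ Q₁'.support, (v = y ∨ v = x) → v = d₁ :=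
        fun v hv h => hQ₁only v hv h.symm
      have hQ₂only2 : ∀ v ∈ Q₂'.support, (v = y ∨ v = x) → v = d₂ :=
        fun v hv h => hQ₂only v hv h.symm
      rcases hc₁ with rfl | rfl
      · -- c₁ = x, hence c₂ = y
        rcases hc₂ with heq | rfl
        · exact absurd heq.symm hc12
        rcases hd₁ with rfl | rfl
        · rcases hd₂ with heq | rfl
          · exact absurd heq.symm hd12
          exact (glue hle hxy.ne hsepxy hA1 hA2 hB1 hB2 P₁' P₂' Q₁' Q₂'
            hP₁only hP₁count hP₂only hP₂count hQ₁only hQ₁count hQ₂only hQ₂count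
            hPdisj' hQdisj').mono hle
        · rcases hd₂ with rfl | heq
          · exact (glue hle hxy.ne hsepxy hA1 hA2 hB2 hB1 P₁' P₂' Q₂' Q₁'
              hP₁only hP₁count hP₂only hP₂count hQ₂only hQ₂count hQ₁only hQ₁count
              hPdisj' hQdisj'').mono hle
          · exact absurd heq.symm hd12
      · -- c₁ = y, hence c₂ = x : swap roles of x and y
        rcases hc₂ with rfl | heq
        swap
        · exact absurd heq.symm hc12
        rcases hd₁ with rfl | rfl
        · rcases hd₂ with heq | rfl
          · exact absurd heq.symm hd12
          exact (glue hle hxy.ne' hsepyx hA1 hA2 hB2 hB1 P₁' P₂' Q₂' Q₁'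
            hP₁only2 hP₁count hP₂only2 hP₂count hQ₂only2 hQ₂count hQ₁only2 hQ₁count
            hPdisj' hQdisj'').mono hle
        · rcases hd₂ with rfl | heq
          · exact (glue hle hxy.ne' hsepyx hA1 hA2 hB1 hB2 P₁' P₂' Q₁' Q₂'
              hP₁only2 hP₁count hP₂only2 hP₂count hQ₁only2 hQ₁count hQ₂only2 hQ₂count
              hPdisj' hQdisj').mono hle
          · exact absurd heq.symm hd12

end Menger2

lemma isAcyclic_of_no_adj {V : Type*} {K : SimpleGraph V} (h : ∀ u v, ¬K.Adj u v) :
    K.IsAcyclic := by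
  intro v c hc
  cases c with
  | nil => exact hc.ne_nil rfl
  | cons h' _ => exact absurd h' (h _ _)

end TwoForestAux

/-- Let `G` be a finite simple connected graph, `H` a 2-connected
subgraph of `G` containing an edge `ê = (w, z)` and two distinct vertices `n_e`, `n₁`,
and let `t` be a vertex of `G` outside `H` such that some path in `G` from `t` to `n_e`
meets `H` only in `n_e`. Then `T({t,w},{n₁,z}) ∪ T({t,z},{n₁,w}) ≠ ∅`: some spanning
forest of `G` consists of two vertex-disjoint trees, one containing `t` and one
endpoint of `ê`, the other containing `n₁` and the other endpoint of `ê`. -/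
theorem twoForests_nonempty_through_cut_vertex (G : SimpleGraph V) (hG : G.Connected)
    (H : G.Subgraph) (h2 : SubgraphTwoConnected G H)
    (w z : V) (hwz : H.Adj w z)
    (n_e n₁ : V) (hne_mem : n_e ∈ H.verts) (hn₁_mem : n₁ ∈ H.verts)
    (hne_ne : n_e ≠ n₁)
    (t : V) (ht : t ∉ H.verts)
    (hpath : ∃ p : G.Walk t n_e, p.IsPath ∧ ∀ v ∈ p.support, v ∈ H.verts → v = n_e) :
    (twoForests G {t, w} {n₁, z} ∪ twoForests G {t, z} {n₁, w}).Nonempty := by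
  classical
  letI : Fintype ↥H.verts := Fintype.ofFinite _
  obtain ⟨hHconn, _, hHdel⟩ := h2
  have hwm : w ∈ H.verts := hwz.fst_mem
  have hzm : z ∈ H.verts := hwz.symm.fst_mem
  set ne' : ↥H.verts := ⟨n_e, hne_mem⟩ with hne'
  set n₁' : ↥H.verts := ⟨n₁, hn₁_mem⟩ with hn₁'
  set w' : ↥H.verts := ⟨w, hwm⟩ with hw'
  set z' : ↥H.verts := ⟨z, hzm⟩ with hz'
  set A : Finset ↥H.verts := {ne', n₁'} with hA
  set B : Finset ↥H.verts := {w', z'} with hB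
  -- the Menger hypothesis for H
  have hypH : TwoForestAux.Hyp H.coe A B := by
    intro Z hZ
    by_cases hZe : Z = ∅
    · subst hZe
      obtain ⟨pw⟩ := hHconn ne' w'
      refine ⟨ne', w', pw, ?_, ?_, by simp⟩
      · exact Finset.mem_insert_self _ _
      · exact Finset.mem_insert_self _ _
    · obtain ⟨c, rfl⟩ : ∃ c, Z = {c} :=
        Finset.card_eq_one.mp (le_antisymm hZ
          (Finset.card_pos.mpr (Finset.nonempty_iff_ne_empty.mpr hZe)))
      have hane : ∃ a : ↥H.verts, a ∈ A ∧ a ≠ c := by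
        by_cases hc1 : ne' = c
        · refine ⟨n₁', Finset.mem_insert_of_mem (Finset.mem_singleton_self _), ?_⟩
          intro hcon
          exact hne_ne (congrArg Subtype.val (hc1.trans hcon.symm))
        · exact ⟨ne', Finset.mem_insert_self _ _, hc1⟩
      have hbne : ∃ b : ↥H.verts, b ∈ B ∧ b ≠ c := by
        by_cases hc1 : w' = c
        · refine ⟨z', Finset.mem_insert_of_mem (Finset.mem_singleton_self _), ?_⟩
          intro hcon
          exact hwz.ne (congrArg Subtype.val (hc1.trans hcon.symm))
        · exact ⟨w', Finset.mem_insert_self _ _, hc1⟩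
      obtain ⟨a, haA, hac⟩ := hane
      obtain ⟨b, hbB, hbc⟩ := hbne
      have hdelc := hHdel ↑c c.2
      have ham : (a : V) ∈ (H.deleteVerts {(c : V)}).verts := by
        rw [SimpleGraph.Subgraph.deleteVerts_verts]
        refine ⟨a.2, ?_⟩
        intro hcon
        rw [Set.mem_singleton_iff] at hcon
        exact hac (Subtype.ext hcon)
      have hbm : (b : V) ∈ (H.deleteVerts {(c : V)}).verts := by
        rw [SimpleGraph.Subgraph.deleteVerts_verts]
        refine ⟨b.2, ?_⟩
        intro hcon
        rw [Set.mem_singleton_iff] at hcon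
        exact hbc (Subtype.ext hcon)
      obtain ⟨pw⟩ := hdelc ⟨(a : V), ham⟩ ⟨(b : V), hbm⟩
      have hle : H.deleteVerts {(c : V)} ≤ H := SimpleGraph.Subgraph.deleteVerts_le
      set pw2 := pw.map (SimpleGraph.Subgraph.inclusion hle) with hpw2
      have hend1 : (SimpleGraph.Subgraph.inclusion hle) ⟨(a : V), ham⟩ = a := by
        apply Subtype.ext; rfl
      have hend2 : (SimpleGraph.Subgraph.inclusion hle) ⟨(b : V), hbm⟩ = b := by
        apply Subtype.ext; rfl
      refine ⟨a, b, pw2.copy hend1 hend2, haA, hbB, ?_⟩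
      intro v hv
      rw [SimpleGraph.Walk.support_copy, hpw2, SimpleGraph.Walk.support_map] at hv
      obtain ⟨u, hu, rfl⟩ := List.mem_map.mp hv
      have hu2 : (u : V) ∈ H.verts \ {(c : V)} := u.2
      intro hcon
      rw [Finset.mem_singleton] at hcon
      apply hu2.2
      rw [Set.mem_singleton_iff]
      exact congrArg Subtype.val hcon
  -- apply Menger
  obtain ⟨a₁, b₁, a₂, b₂, p, q, hA₁, hB₁, hA₂, hB₂, hdisj⟩ :=
    TwoForestAux.menger_core (H.coe.edgeSet.ncard) H.coe A B le_rfl hypH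
  -- sort the starting points
  have main : ∃ (bP bQ : ↥H.verts) (P : H.coe.Walk ne' bP) (Q : H.coe.Walk n₁' bQ),
      bP ∈ B ∧ bQ ∈ B ∧ bP ≠ bQ ∧ ∀ v ∈ P.support, v ∉ Q.support := by
    have ha12 : a₁ ≠ a₂ := fun h => hdisj a₁ p.start_mem_support (by
      rw [h]; exact q.start_mem_support)
    rcases Finset.mem_insert.mp hA₁ with h1 | h1
    · have h2 : a₂ = n₁' := by
        rcases Finset.mem_insert.mp hA₂ with h2 | h2
        · exact absurd (h1.trans h2.symm) ha12
        · exact Finset.mem_singleton.mp h2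
      refine ⟨b₁, b₂, p.copy h1 rfl, q.copy h2 rfl, hB₁, hB₂, ?_, ?_⟩
      · intro h
        exact hdisj b₁ p.end_mem_support (by rw [h]; exact q.end_mem_support)
      · intro v hv hv2
        rw [SimpleGraph.Walk.support_copy] at hv hv2
        exact hdisj v hv hv2
    · have h1' : a₁ = n₁' := Finset.mem_singleton.mp h1
      have h2 : a₂ = ne' := by
        rcases Finset.mem_insert.mp hA₂ with h2 | h2
        · exact h2
        · exact absurd (h1'.trans (Finset.mem_singleton.mp h2).symm) ha12
      refine ⟨b₂, b₁, q.copy h2 rfl, p.copy h1' rfl, hB₂, hB₁, ?_, ?_⟩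
      · intro h
        exact hdisj b₁ p.end_mem_support (by rw [← h]; exact q.end_mem_support)
      · intro v hv hv2
        rw [SimpleGraph.Walk.support_copy] at hv hv2
        exact hdisj v hv2 hv
  obtain ⟨bP, bQ, P, Q, hbPB, hbQB, hbPQ, hPQdisj⟩ := main
  -- move to G
  set PG := P.map H.hom with hPG
  set QG := Q.map H.hom with hQG
  have hPGsup : ∀ v ∈ PG.support, ∃ u ∈ P.support, (u : V) = v := by
    intro v hv
    rw [hPG, SimpleGraph.Walk.support_map] at hv
    obtain ⟨u, hu, rfl⟩ := List.mem_map.mp hv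
    exact ⟨u, hu, rfl⟩
  have hQGsup : ∀ v ∈ QG.support, ∃ u ∈ Q.support, (u : V) = v := by
    intro v hv
    rw [hQG, SimpleGraph.Walk.support_map] at hv
    obtain ⟨u, hu, rfl⟩ := List.mem_map.mp hv
    exact ⟨u, hu, rfl⟩
  obtain ⟨p₀, _, hp₀H⟩ := hpath
  set W₁ : G.Walk t (bP : V) := p₀.append PG with hW₁
  set S₁ : Finset V := W₁.support.toFinset with hS₁
  set S₂ : Finset V := QG.support.toFinset with hS₂
  have hS₁mem : ∀ v : V, v ∈ S₁ ↔ v ∈ W₁.support := fun v => List.mem_toFinset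
  have hS₂mem : ∀ v : V, v ∈ S₂ ↔ v ∈ QG.support := fun v => List.mem_toFinset
  have hS12 : ∀ v ∈ S₁, v ∉ S₂ := by
    intro v hv hv2
    rw [hS₁mem] at hv
    rw [hS₂mem] at hv2
    obtain ⟨u₂, hu₂, rfl⟩ := hQGsup v hv2
    rw [hW₁] at hv
    rcases TwoForestAux.mem_support_append hv with hv | hv
    · have heq : (u₂ : V) = n_e := hp₀H _ hv u₂.2
      have hu2e : u₂ = ne' := Subtype.ext heq
      exact hPQdisj ne' P.start_mem_support (hu2e ▸ hu₂)
    · obtain ⟨u₁, hu₁, he⟩ := hPGsup _ hv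
      have heq : u₁ = u₂ := Subtype.ext he
      exact hPQdisj u₁ hu₁ (heq ▸ hu₂)
  have htS₁ : t ∈ S₁ := by rw [hS₁mem]; exact W₁.start_mem_support
  have hbPS₁ : (bP : V) ∈ S₁ := by rw [hS₁mem]; exact W₁.end_mem_support
  have hn₁S₂ : n₁ ∈ S₂ := by rw [hS₂mem]; exact QG.start_mem_support
  have hbQS₂ : (bQ : V) ∈ S₂ := by rw [hS₂mem]; exact QG.end_mem_support
  have htn₁ : t ≠ n₁ := fun h => ht (h ▸ hn₁_mem)
  have hn₁S₁ : n₁ ∉ S₁ := fun h => hS12 n₁ h hn₁S₂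
  -- seed invariant
  have seed : TwoForestAux.Inv G (∅ : Finset (Sym2 V)) {t} {n₁} t n₁ := by
    refine ⟨?_, ?_, ?_, Finset.mem_singleton_self _, Finset.mem_singleton_self _, ?_, ?_, ?_⟩
    · intro e he; exact absurd he (Finset.notMem_empty e)
    · intro u v h; exact absurd h (Finset.notMem_empty _)
    · intro v h1 h2
      rw [Finset.mem_singleton] at h1 h2
      exact htn₁ ((h1.symm.trans h2))
    · apply TwoForestAux.isAcyclic_of_no_adj
      intro u v h
      rw [SimpleGraph.fromEdgeSet_adj] at h
      simp at h
    · intro x hx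
      rw [Finset.mem_singleton] at hx
      rw [hx]
    · intro x hx
      rw [Finset.mem_singleton] at hx
      rw [hx]
  -- stage A : grow the first tree to S₁
  have hwalks₁ : ∀ v ∈ S₁, ∃ pp : G.Walk t v, ∀ u ∈ pp.support, u ∈ S₁ := by
    intro v hv
    rw [hS₁mem] at hv
    exact ⟨W₁.takeUntil v hv, fun u hu => (hS₁mem u).mpr
      (SimpleGraph.Walk.support_takeUntil_subset _ _ hu)⟩
  have hS2a : ∀ x ∈ S₁, x ∉ ({n₁} : Finset V) := by
    intro x hx hcon
    rw [Finset.mem_singleton] at hcon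
    exact hn₁S₁ (hcon ▸ hx)
  obtain ⟨F₁, hInv₁⟩ := TwoForestAux.grow_within G hS2a hwalks₁ (S₁ \ {t}).card {t} ∅ seed
    (Finset.singleton_subset_iff.mpr htS₁) rfl
  -- stage B : grow the second tree to S₂
  have hwalks₂ : ∀ v ∈ S₂, ∃ pp : G.Walk n₁ v, ∀ u ∈ pp.support, u ∈ S₂ := by
    intro v hv
    rw [hS₂mem] at hv
    exact ⟨QG.takeUntil v hv, fun u hu => (hS₂mem u).mpr
      (SimpleGraph.Walk.support_takeUntil_subset _ _ hu)⟩
  have hS2b : ∀ x ∈ S₂, x ∉ S₁ := fun x hx hcon => hS12 x hcon hx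
  obtain ⟨F₂, hInv₂⟩ := TwoForestAux.grow_within G hS2b hwalks₂ (S₂ \ {n₁}).card {n₁} F₁
    hInv₁.swap (Finset.singleton_subset_iff.mpr hn₁S₂) rfl
  have hInv₂' := hInv₂.swap
  -- stage C : grow the forest to cover all vertices
  obtain ⟨F₃, c₁', c₂', hInv₃, hsub₁, hsub₂, huniv⟩ :=
    TwoForestAux.grow_all G hG.preconnected (Finset.univ \ (S₁ ∪ S₂)).card S₁ S₂ F₂ hInv₂' rfl
  -- the two-tree forest
  have hITF : IsTwoTreeForest G {t, (bP : V)} {n₁, (bQ : V)} F₃ := by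
    refine ⟨?_, hInv₃.acyc, t, n₁, ?_, ?_, ?_, ?_⟩
    · intro e he
      exact hInv₃.subE e (Finset.mem_coe.mp he)
    · intro hreach
      have hstay := TwoForestAux.reachable_stay (s := (↑F₃ : Set (Sym2 V)))
        (c₁ := (↑c₁' : Set V)) (c₂ := (↑c₂' : Set V))
        (fun u v h => by
          rcases hInv₃.sides u v (Finset.mem_coe.mp h) with ⟨hh1, hh2⟩ | ⟨hh1, hh2⟩
          · exact Or.inl ⟨Finset.mem_coe.mpr hh1, Finset.mem_coe.mpr hh2⟩
          · exact Or.inr ⟨Finset.mem_coe.mpr hh1, Finset.mem_coe.mpr hh2⟩)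
        (fun v h1 h2 => hInv₃.disj v (Finset.mem_coe.mp h1) (Finset.mem_coe.mp h2))
        (Finset.mem_coe.mpr (hsub₁ htS₁)) hreach
      exact hInv₃.disj n₁ (Finset.mem_coe.mp hstay) (hsub₂ hn₁S₂)
    · intro x
      have hx : x ∈ c₁' ∪ c₂' := by rw [huniv]; exact Finset.mem_univ x
      rcases Finset.mem_union.mp hx with hx | hx
      · exact Or.inl (hInv₃.reach1 x hx)
      · exact Or.inr (hInv₃.reach2 x hx)
    · intro x hx
      rcases hx with rfl | hx
      · exact hInv₃.reach1 x (hsub₁ htS₁)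
      · rw [Set.mem_singleton_iff] at hx
        rw [hx]
        exact hInv₃.reach1 _ (hsub₁ hbPS₁)
    · intro x hx
      rcases hx with rfl | hx
      · exact hInv₃.reach2 x (hsub₂ hn₁S₂)
      · rw [Set.mem_singleton_iff] at hx
        rw [hx]
        exact hInv₃.reach2 _ (hsub₂ hbQS₂)
  -- conclude, splitting on which endpoint of the edge is in which tree
  have hbPwz : bP = w' ∨ bP = z' := by
    rcases Finset.mem_insert.mp hbPB with h | h
    · exact Or.inl h
    · exact Or.inr (Finset.mem_singleton.mp h)
  rcases hbPwz with h | h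
  · have hbQz : bQ = z' := by
      rcases Finset.mem_insert.mp hbQB with h2 | h2
      · exact absurd (h.trans h2.symm) hbPQ
      · exact Finset.mem_singleton.mp h2
    refine ⟨F₃, Finset.mem_union_left _ ?_⟩
    have hwv : (bP : V) = w := by rw [h]
    have hzv : (bQ : V) = z := by rw [hbQz]
    rw [← hwv, ← hzv]
    simp only [twoForests]
    rw [Finset.mem_filter]
    exact ⟨Finset.mem_univ _, hITF⟩
  · have hbQw : bQ = w' := by
      rcases Finset.mem_insert.mp hbQB with h2 | h2
      · exact h2
      · exact absurd (h.trans (Finset.mem_singleton.mp h2).symm) hbPQ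
    refine ⟨F₃, Finset.mem_union_right _ ?_⟩
    have hzv : (bP : V) = z := by rw [h]
    have hwv : (bQ : V) = w := by rw [hbQw]
    rw [← hwv, ← hzv]
    simp only [twoForests]
    rw [Finset.mem_filter]
    exact ⟨Finset.mem_univ _, hITF⟩
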